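/- Let L ⊂ ℂ be a lattice, v primitive, and v' a minimal-norm positive completion. Write ρ(v) = ε·|v'|/|v| where ε = +1 if Re(v'/v) > 0 and ε = −1 otherwise, and sk(v,v') = Re(v'/v). Then ρ(v) = sk(v,v')·(1 + O(1/|v|²)), with implied constant depending only on L. -/

import Mathlib

noncomputable section

open Complex

/-- `{v, v'}` is a positively oriented ℤ-basis of the lattice `L ⊆ ℂ`. -/
def IsOrientedBasis (L : AddSubgroup ℂ) (v v' : ℂ) : Prop :=
  0 < (v' / v).im ∧ AddSubgroup.closure {v, v'} = L

/-- `v` is a primitive vector of `L`: it can be completed to a basis of `L`. -/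
def IsPrimitive (L : AddSubgroup ℂ) (v : ℂ) : Prop :=
  ∃ v', IsOrientedBasis L v v'

/-- `v'` has minimal norm among completions of `v` to a positively oriented basis of `L`. -/
def IsMinCompletion (L : AddSubgroup ℂ) (v v' : ℂ) : Prop :=
  IsOrientedBasis L v v' ∧ ∀ w, IsOrientedBasis L v w → ‖v'‖ ≤ ‖w‖

/-- The (signed) area of the parallelogram spanned by `v, v'`; it is positive
when `{v, v'}` is positively oriented, and equals `|v||v'| sin α`. -/
def pArea (v v' : ℂ) : ℝ := ((starRingEnd ℂ) v * v').im

/-!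
Write `q = v'/v`. The parallelogram spanned by a basis has the covolume of `L` as area,
so `Im q · |v|² = area(L)` and `Im q = O(1/|v|²)`. On the other hand `|q|·|v| = |v'| ≥ μ(L)`,
so for large `|v|` almost all of `|q|` is carried by `Re q`, with `|Re q|·|v| ≥ μ(L)/2`.
Finally `ρ(v) - sk(v,v')` is `±(|q| - |Re q|)`, and `(|q| - |Re q|)·|Re q| ≤ (Im q)²` turns
these two bounds into `|ρ(v) - sk(v,v')| ≤ (2 area(L)/μ(L))² · |Re q| / |v|²`.
-/

lemma pArea_eq_im_div_mul_sq_norm (v v' : ℂ) : pArea v v' = (v' / v).im * ‖v‖ ^ 2 := by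
  rcases eq_or_ne v 0 with rfl | hv
  · simp [pArea]
  have h : (starRingEnd ℂ) v * v' = v' / v * ((‖v‖ ^ 2 : ℝ) : ℂ) := by
    rw [ofReal_pow, ← conj_mul']
    field_simp
  rw [pArea, h, im_mul_ofReal]

lemma pArea_zsmul_add_zsmul (a b c d : ℤ) (v v' : ℂ) :
    pArea (a • v + b • v') (c • v + d • v') = (a * d - b * c) * pArea v v' := by
  simp only [pArea, zsmul_eq_mul, map_add, map_mul, map_intCast, mul_im, mul_re, add_im, add_re,
    intCast_re, intCast_im, conj_re, conj_im]
  ring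

lemma abs_pArea_le (v v' : ℂ) : |pArea v v'| ≤ ‖v‖ * ‖v'‖ := by
  calc |pArea v v'| ≤ ‖(starRingEnd ℂ) v * v'‖ := abs_im_le_norm _
    _ = ‖v‖ * ‖v'‖ := by simp

namespace IsOrientedBasis

variable {L : AddSubgroup ℂ} {v v' : ℂ}

lemma ne_zero_left (h : IsOrientedBasis L v v') : v ≠ 0 := by
  rintro rfl
  simpa using h.1

lemma ne_zero_right (h : IsOrientedBasis L v v') : v' ≠ 0 := by
  rintro rfl
  simpa using h.1

lemma left_mem (h : IsOrientedBasis L v v') : v ∈ L :=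
  h.2 ▸ AddSubgroup.subset_closure (by simp)

lemma right_mem (h : IsOrientedBasis L v v') : v' ∈ L :=
  h.2 ▸ AddSubgroup.subset_closure (by simp)

lemma exists_zsmul_add_zsmul_eq (h : IsOrientedBasis L v v') {z : ℂ} (hz : z ∈ L) :
    ∃ a b : ℤ, a • v + b • v' = z :=
  AddSubgroup.mem_closure_pair.1 (h.2 ▸ hz)

lemma pArea_pos (h : IsOrientedBasis L v v') : 0 < pArea v v' := by
  rw [pArea_eq_im_div_mul_sq_norm]
  exact mul_pos h.1 (pow_pos (norm_pos_iff.2 h.ne_zero_left) 2)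

/-- The change of basis matrix has integer entries and positive determinant, hence determinant
`≥ 1`. -/
lemma pArea_le {w w' : ℂ} (h : IsOrientedBasis L v v') (h' : IsOrientedBasis L w w') :
    pArea v v' ≤ pArea w w' := by
  obtain ⟨a, b, rfl⟩ := h.exists_zsmul_add_zsmul_eq h'.left_mem
  obtain ⟨c, d, rfl⟩ := h.exists_zsmul_add_zsmul_eq h'.right_mem
  have harea := h'.pArea_pos
  rw [pArea_zsmul_add_zsmul] at harea ⊢
  have hdet : (0 : ℤ) < a * d - b * c := by
    exact_mod_cast pos_of_mul_pos_left harea h.pArea_pos.le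
  have hdet' : (1 : ℝ) ≤ a * d - b * c := by exact_mod_cast hdet
  exact le_mul_of_one_le_left h.pArea_pos.le hdet'

lemma pArea_le_max_mul_norm (h : IsOrientedBasis L v v') {z : ℂ} (hz : z ∈ L) (hz0 : z ≠ 0) :
    pArea v v' ≤ max ‖v‖ ‖v'‖ * ‖z‖ := by
  have hA := h.pArea_pos
  have of_multiple (x y : ℂ) (n : ℤ) (hn : n ≠ 0) (hxy : pArea x y = n * pArea v v') :
      pArea v v' ≤ ‖x‖ * ‖y‖ :=
    calc pArea v v' ≤ |(n : ℝ)| * pArea v v' :=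
          le_mul_of_one_le_left hA.le (by exact_mod_cast Int.one_le_abs hn)
      _ = |pArea x y| := by rw [hxy, abs_mul, abs_of_pos hA]
      _ ≤ ‖x‖ * ‖y‖ := abs_pArea_le x y
  obtain ⟨a, b, rfl⟩ := h.exists_zsmul_add_zsmul_eq hz
  by_cases hb : b = 0
  · subst hb
    have ha : a ≠ 0 := by rintro rfl; simp at hz0
    rw [zero_smul, add_zero] at hz0 ⊢
    have := of_multiple (a • v) v' a ha (by simpa using pArea_zsmul_add_zsmul a 0 0 1 v v')
    nlinarith [le_max_right ‖v‖ ‖v'‖, norm_nonneg (a • v)]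
  · have := of_multiple v (a • v + b • v') b hb
      (by simpa using pArea_zsmul_add_zsmul 1 0 a b v v')
    nlinarith [le_max_left ‖v‖ ‖v'‖, norm_nonneg (a • v + b • v')]

end IsOrientedBasis

lemma abs_sign_mul_norm_sub_re (q : ℂ) :
    |(if 0 < q.re then (1 : ℝ) else -1) * ‖q‖ - q.re| = ‖q‖ - |q.re| := by
  split_ifs with h
  · rw [one_mul, abs_of_pos h, abs_of_nonneg (sub_nonneg.2 (re_le_norm q))]
  · rw [abs_of_nonpos (not_lt.1 h), neg_one_mul, ← neg_add', abs_neg, sub_neg_eq_add,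
      abs_of_nonneg (by linarith [neg_abs_le q.re, abs_re_le_norm q])]

lemma norm_sub_abs_re_mul_abs_re_le (q : ℂ) : (‖q‖ - |q.re|) * |q.re| ≤ q.im ^ 2 := by
  nlinarith [sq_norm_sub_sq_re q, abs_re_le_norm q, abs_nonneg q.re, sq_abs q.re]

section Estimate

variable {q : ℂ} {V a μ : ℝ}

lemma half_le_abs_re_mul (hμ : 0 < μ) (him : |q.im| * V ^ 2 ≤ a) (hnorm : μ ≤ ‖q‖ * V)
    (hV : 2 * a / μ ≤ V) : μ / 2 ≤ |q.re| * V := by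
  have hVpos : 0 < V := pos_of_mul_pos_right (hμ.trans_le hnorm) (norm_nonneg q)
  have ha : 2 * a ≤ μ * V := by rwa [div_le_iff₀ hμ, mul_comm V] at hV
  have him' : |q.im| * V ≤ μ / 2 := le_of_mul_le_mul_right (by nlinarith) hVpos
  have hsq : (‖q‖ * V) ^ 2 = (|q.re| * V) ^ 2 + (|q.im| * V) ^ 2 := by
    rw [mul_pow, mul_pow, mul_pow, sq_abs, sq_abs, ← sq_norm_sub_sq_re q]; ring
  refine le_of_pow_le_pow_left₀ two_ne_zero (by positivity) ?_
  nlinarith [abs_nonneg q.im, mul_self_le_mul_self (by positivity) him']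

lemma norm_sub_abs_re_le (hμ : 0 < μ) (him : |q.im| * V ^ 2 ≤ a) (hnorm : μ ≤ ‖q‖ * V)
    (hV : 2 * a / μ ≤ V) : ‖q‖ - |q.re| ≤ (2 * a / μ) ^ 2 * |q.re| / V ^ 2 := by
  have hre := half_le_abs_re_mul hμ him hnorm hV
  have hVpos : 0 < V := pos_of_mul_pos_right (hμ.trans_le hnorm) (norm_nonneg q)
  have hre_pos : 0 < |q.re| := pos_of_mul_pos_left ((half_pos hμ).trans_le hre) hVpos.le
  rw [le_div_iff₀ (by positivity)]
  refine le_of_mul_le_mul_right ?_ (by positivity : 0 < |q.re| * V ^ 2)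
  calc (‖q‖ - |q.re|) * V ^ 2 * (|q.re| * V ^ 2)
        = (‖q‖ - |q.re|) * |q.re| * V ^ 4 := by ring
    _ ≤ q.im ^ 2 * V ^ 4 := by gcongr; exact norm_sub_abs_re_mul_abs_re_le q
    _ = (|q.im| * V ^ 2) ^ 2 := by rw [mul_pow, sq_abs]; ring
    _ ≤ a ^ 2 := by gcongr
    _ = (2 * a / μ) ^ 2 * (μ / 2) ^ 2 := by field_simp
    _ ≤ (2 * a / μ) ^ 2 * (|q.re| * V) ^ 2 := by gcongr
    _ = (2 * a / μ) ^ 2 * |q.re| * (|q.re| * V ^ 2) := by ring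

end Estimate

/-- for a minimal positive completion `v'` of `v`, the signed
ratio `ρ(v) = ±|v'|/|v|` (sign `+` iff `Re(v'/v) > 0`) satisfies
`ρ(v) = sk(v,v')·(1 + O(1/|v|²))` with `sk(v,v') = Re(v'/v)`, the implied
constant depending only on `L` (asymptotically as `|v| → ∞`). -/
theorem rho_eq_sk_asymptotic (L : AddSubgroup ℂ) (w w' : ℂ)
    (hL : IsOrientedBasis L w w') :
    ∃ C > (0 : ℝ), ∃ V₀ : ℝ, ∀ v v' : ℂ, IsMinCompletion L v v' → V₀ ≤ ‖v‖ →
      |(if 0 < (v' / v).re then (1 : ℝ) else -1) * ‖v'‖ / ‖v‖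
          - (v' / v).re| ≤ C * |(v' / v).re| / (‖v‖) ^ 2 := by
  set A := pArea w w'
  set μ := A / max ‖w‖ ‖w'‖
  have hA : 0 < A := hL.pArea_pos
  have hM : 0 < max ‖w‖ ‖w'‖ := lt_max_of_lt_left (norm_pos_iff.2 hL.ne_zero_left)
  have hμ : 0 < μ := div_pos hA hM
  refine ⟨(2 * A / μ) ^ 2, by positivity, 2 * A / μ, fun v v' hmin hV => ?_⟩
  have hbasis := hmin.1
  have him : |(v' / v).im| * ‖v‖ ^ 2 ≤ A := by
    rw [abs_of_pos hbasis.1, ← pArea_eq_im_div_mul_sq_norm]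
    exact hbasis.pArea_le hL
  have hnorm : μ ≤ ‖v' / v‖ * ‖v‖ := by
    rw [norm_div, div_mul_cancel₀ _ (norm_ne_zero_iff.2 hbasis.ne_zero_left), div_le_iff₀ hM,
      mul_comm]
    exact hL.pArea_le_max_mul_norm hbasis.right_mem hbasis.ne_zero_right
  rw [mul_div_assoc, ← norm_div, abs_sign_mul_norm_sub_re]
  exact norm_sub_abs_re_le hμ him hnorm hV
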